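/- Let P be symmetric positive definite. The discrete-time dissipation inequality (Ax + Bu)^T P (Ax + Bu) − x^T P x ≤ u^T (C(A − I)x + CBu) − (Cx)^T Σ (C(A − I)x + CBu) holds for all x ∈ ℝ^n and u ∈ ℝ^m if and only if the matrix M₁ − (1/2)(M₂ + M₂^T) is negative semidefinite. (This is the discrete-time LMI characterization of ODP(Σ): with storage function S(x_k) = x_k^T P x_k, the inequality states S(x_{k+1}) − S(x_k) ≤ u_k^T Δy_k − y_k^T Σ Δy_k along trajectories of x_{k+1} = Ax_k + Bu_k, y_k = Cx_k, Δy_k := y_{k+1} − y_k.) -/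

import Mathlib

/-!
Writing `z = (x, u)`, the quadratic form of `M₁` is the storage increment
`S(Ax + Bu) - S(x)` for symmetric `P`, and the quadratic form of `M₂` is the
supply rate `uᵀ Δy - yᵀ Σ Δy`. Since a quadratic form only sees the symmetric part of its matrix,
`M₂` may be replaced by `(M₂ + M₂ᵀ)/2`, and the dissipation inequality for all `(x, u)` is
exactly negative semidefiniteness of `M₁ - (M₂ + M₂ᵀ)/2`.
-/

open Matrix

namespace Matrix

variable {ι κ R : Type*} [Fintype ι] [Fintype κ]

theorem dotProduct_half_smul_add_transpose_mulVec_self [Field R] [NeZero (2 : R)]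
    (N : Matrix ι ι R) (z : ι → R) :
    z ⬝ᵥ ((1 / 2 : R) • (N + Nᵀ)) *ᵥ z = z ⬝ᵥ N *ᵥ z := by
  rw [smul_mulVec, dotProduct_smul, add_mulVec, dotProduct_add, dotProduct_transpose_mulVec,
    smul_eq_mul, ← two_mul, ← mul_assoc, one_div_mul_cancel two_ne_zero, one_mul]

theorem sumElim_dotProduct_fromBlocks_mulVec_sumElim [CommSemiring R]
    (A : Matrix ι ι R) (B : Matrix ι κ R) (C : Matrix κ ι R) (D : Matrix κ κ R)
    (x : ι → R) (u : κ → R) :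
    Sum.elim x u ⬝ᵥ fromBlocks A B C D *ᵥ Sum.elim x u =
      x ⬝ᵥ A *ᵥ x + x ⬝ᵥ B *ᵥ u + u ⬝ᵥ C *ᵥ x + u ⬝ᵥ D *ᵥ u := by
  rw [fromBlocks_mulVec, sumElim_dotProduct_sumElim, Sum.elim_comp_inl, Sum.elim_comp_inr,
    dotProduct_add, dotProduct_add]
  ring

theorem forall_dotProduct_sub_symm_mulVec_nonpos_iff [Field R] [LinearOrder R]
    [IsStrictOrderedRing R] {M N : Matrix (ι ⊕ κ) (ι ⊕ κ) R} {f g : (ι → R) → (κ → R) → R}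
    (hM : ∀ x u, Sum.elim x u ⬝ᵥ M *ᵥ Sum.elim x u = f x u)
    (hN : ∀ x u, Sum.elim x u ⬝ᵥ N *ᵥ Sum.elim x u = g x u) :
    (∀ x u, f x u ≤ g x u) ↔ ∀ z, z ⬝ᵥ (M - (1 / 2 : R) • (N + Nᵀ)) *ᵥ z ≤ 0 := by
  have hform : ∀ x u, Sum.elim x u ⬝ᵥ (M - (1 / 2 : R) • (N + Nᵀ)) *ᵥ Sum.elim x u =
      f x u - g x u := fun x u => by
    rw [sub_mulVec, dotProduct_sub, dotProduct_half_smul_add_transpose_mulVec_self, hM, hN]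
  constructor
  · intro h z
    rw [← Sum.elim_comp_inl_inr z, hform, sub_nonpos]
    exact h _ _
  · intro h x u
    rw [← sub_nonpos, ← hform]
    exact h _

variable [CommRing R]

theorem sumElim_dotProduct_fromBlocks_mulVec_storage {P : Matrix ι ι R} (hP : Pᵀ = P)
    (A : Matrix ι ι R) (B : Matrix ι κ R) (x : ι → R) (u : κ → R) :
    Sum.elim x u ⬝ᵥ fromBlocks (Aᵀ * P * A - P) (Aᵀ * P * B) (Bᵀ * P * A) (Bᵀ * P * B) *ᵥ
        Sum.elim x u =
      (A *ᵥ x + B *ᵥ u) ⬝ᵥ P *ᵥ (A *ᵥ x + B *ᵥ u) - x ⬝ᵥ P *ᵥ x := by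
  have hPsymm : (A *ᵥ x) ⬝ᵥ P *ᵥ (B *ᵥ u) = (B *ᵥ u) ⬝ᵥ P *ᵥ (A *ᵥ x) := by
    rw [← dotProduct_transpose_mulVec, hP]
  rw [sumElim_dotProduct_fromBlocks_mulVec_sumElim]
  simp only [sub_mulVec, dotProduct_sub, ← mulVec_mulVec, dotProduct_transpose_mulVec,
    dotProduct_comm (P *ᵥ _), mulVec_add, dotProduct_add, add_dotProduct]
  rw [hPsymm]
  ring

theorem sumElim_dotProduct_fromBlocks_mulVec_supply [DecidableEq ι] (A : Matrix ι ι R) (B : Matrix ι κ R)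
    (C : Matrix κ ι R) (Sg : Matrix κ κ R) (x : ι → R) (u : κ → R) :
    Sum.elim x u ⬝ᵥ fromBlocks (-(Cᵀ * Sg * (C * (A - 1)))) (-(Cᵀ * Sg * (C * B)))
        (C * (A - 1)) (C * B) *ᵥ Sum.elim x u =
      u ⬝ᵥ ((C * (A - 1)) *ᵥ x + (C * B) *ᵥ u)
        - (C *ᵥ x) ⬝ᵥ Sg *ᵥ ((C * (A - 1)) *ᵥ x + (C * B) *ᵥ u) := by
  rw [sumElim_dotProduct_fromBlocks_mulVec_sumElim]
  simp only [neg_mulVec, dotProduct_neg, ← mulVec_mulVec, dotProduct_transpose_mulVec,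
    mulVec_add, dotProduct_add, dotProduct_comm _ (C *ᵥ x)]
  ring

end Matrix

theorem dt_odp_lmi_characterization_general
    {n m : ℕ}
    (A : Matrix (Fin n) (Fin n) ℝ) (B : Matrix (Fin n) (Fin m) ℝ)
    (C : Matrix (Fin m) (Fin n) ℝ) (Sg : Matrix (Fin m) (Fin m) ℝ)
    (P : Matrix (Fin n) (Fin n) ℝ)
    (hP : P.PosDef) :
    (∀ (x : Fin n → ℝ) (u : Fin m → ℝ),
        (A *ᵥ x + B *ᵥ u) ⬝ᵥ P *ᵥ (A *ᵥ x + B *ᵥ u) - x ⬝ᵥ P *ᵥ x ≤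
          u ⬝ᵥ ((C * (A - 1)) *ᵥ x + (C * B) *ᵥ u)
            - (C *ᵥ x) ⬝ᵥ Sg *ᵥ ((C * (A - 1)) *ᵥ x + (C * B) *ᵥ u)) ↔
      (∀ z : Fin n ⊕ Fin m → ℝ,
        z ⬝ᵥ (fromBlocks (Aᵀ * P * A - P) (Aᵀ * P * B) (Bᵀ * P * A) (Bᵀ * P * B)
            - (1 / 2 : ℝ) •
              (fromBlocks (-(Cᵀ * Sg * (C * (A - 1)))) (-(Cᵀ * Sg * (C * B)))
                  (C * (A - 1)) (C * B)
                + (fromBlocks (-(Cᵀ * Sg * (C * (A - 1)))) (-(Cᵀ * Sg * (C * B)))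
                    (C * (A - 1)) (C * B))ᵀ)) *ᵥ z ≤ 0) :=
  forall_dotProduct_sub_symm_mulVec_nonpos_iff
    (sumElim_dotProduct_fromBlocks_mulVec_storage hP.1 A B)
    (sumElim_dotProduct_fromBlocks_mulVec_supply A B C Sg)

/-- Discrete-time LMI characterization of ODP(Σ) with storage `S(x) = xᵀ P x`:
the discrete dissipation inequality holds for all `x, u` iff `M₁ - (1/2)(M₂ + M₂ᵀ) ⪯ 0`. -/
theorem dt_odp_lmi_characterization
    {n m : ℕ} (hn : 0 < n) (hm : 0 < m)
    (A : Matrix (Fin n) (Fin n) ℝ) (B : Matrix (Fin n) (Fin m) ℝ)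
    (C : Matrix (Fin m) (Fin n) ℝ) (Sg : Matrix (Fin m) (Fin m) ℝ)
    (P : Matrix (Fin n) (Fin n) ℝ)
    (hSg : Sgᵀ = Sg) (hP : P.PosDef) :
    (∀ (x : Fin n → ℝ) (u : Fin m → ℝ),
        (A *ᵥ x + B *ᵥ u) ⬝ᵥ P *ᵥ (A *ᵥ x + B *ᵥ u) - x ⬝ᵥ P *ᵥ x ≤
          u ⬝ᵥ ((C * (A - 1)) *ᵥ x + (C * B) *ᵥ u)
            - (C *ᵥ x) ⬝ᵥ Sg *ᵥ ((C * (A - 1)) *ᵥ x + (C * B) *ᵥ u)) ↔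
      (∀ z : Fin n ⊕ Fin m → ℝ,
        z ⬝ᵥ (fromBlocks (Aᵀ * P * A - P) (Aᵀ * P * B) (Bᵀ * P * A) (Bᵀ * P * B)
            - (1 / 2 : ℝ) •
              (fromBlocks (-(Cᵀ * Sg * (C * (A - 1)))) (-(Cᵀ * Sg * (C * B)))
                  (C * (A - 1)) (C * B)
                + (fromBlocks (-(Cᵀ * Sg * (C * (A - 1)))) (-(Cᵀ * Sg * (C * B)))
                    (C * (A - 1)) (C * B))ᵀ)) *ᵥ z ≤ 0) :=
  dt_odp_lmi_characterization_general A B C Sg P hP
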